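/- Let f : [a,b] → ℝ be a convex function on [a,b]. Then for every x ∈ (a,b): (1/2)·[ (b−x)²·f′₊(x) − (x−a)²·f′₋(x) ] ≤ (x−a)·f(a) + (b−x)·f(b) − ∫_a^b f(t) dt, where f′₊(x) and f′₋(x) denote the right and left derivatives of f at x (which exist since f is convex). -/
import Mathlib


open MeasureTheory Set intervalIntegral

/-- **Lower bound in the generalised trapezoid inequality for convex functions**
(Theorem 1): for a convex `f : [a,b] → ℝ` and `x ∈ (a,b)`, with `fdp` the right
derivative and `fdm` the left derivative of `f` at `x`,
`(1/2)[(b−x)² f′₊(x) − (x−a)² f′₋(x)] ≤ (x−a)f(a) + (b−x)f(b) − ∫_a^b f`. -/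
theorem trapezoid_convex_lower_bound
    (a b : ℝ) (hab : a < b) (f : ℝ → ℝ)
    (hf : ConvexOn ℝ (Set.Icc a b) f)
    (x : ℝ) (hx : x ∈ Set.Ioo a b) (fdp fdm : ℝ)
    (hfdp : HasDerivWithinAt f fdp (Set.Ici x) x)
    (hfdm : HasDerivWithinAt f fdm (Set.Iic x) x) :
    (1 / 2) * ((b - x) ^ 2 * fdp - (x - a) ^ 2 * fdm) ≤
      (x - a) * f a + (b - x) * f b - ∫ t in a..b, f t := by
  obtain ⟨hax, hxb⟩ := hx
  have hxI : x ∈ Icc a b := ⟨hax.le, hxb.le⟩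
  have haI : a ∈ Icc a b := ⟨le_refl a, hab.le⟩
  have hbI : b ∈ Icc a b := ⟨hab.le, le_refl b⟩
  -- slope bounds at x
  have hsl1 : (f x - f a) / (x - a) ≤ fdm := by
    have := hf.slope_le_of_hasDerivWithinAt_Iio haI hxI hax (hfdm.mono Iio_subset_Iic_self)
    simpa [slope_def_field] using this
  have hsl2 : fdp ≤ (f b - f x) / (b - x) := by
    have := hf.le_slope_of_hasDerivWithinAt_Ioi hxI hbI hxb (hfdp.mono Ioi_subset_Ici_self)
    simpa [slope_def_field] using this
  -- pointwise bounds
  have key1 : ∀ t ∈ Icc a x, fdm * (a - t) ≤ f a - f t := by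
    intro t ⟨hat, htx⟩
    rcases eq_or_lt_of_le hat with rfl | hat
    · simp
    · have h1 : (f t - f a) / (t - a) ≤ (f x - f a) / (x - a) :=
        hf.secant_mono haI ⟨hat.le, htx.trans hxb.le⟩ hxI hat.ne' hax.ne' htx
      have h2 : (f t - f a) / (t - a) ≤ fdm := h1.trans hsl1
      have ht : 0 < t - a := by linarith
      rw [div_le_iff₀ ht] at h2
      nlinarith
  have key2 : ∀ t ∈ Icc x b, fdp * (b - t) ≤ f b - f t := by
    intro t ⟨hxt, htb⟩
    rcases eq_or_lt_of_le htb with rfl | htb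
    · simp
    · have h1 : (f x - f b) / (x - b) ≤ (f t - f b) / (t - b) :=
        hf.secant_mono hbI hxI ⟨hax.le.trans hxt, htb.le⟩ (by linarith) (by linarith) hxt
      have h2 : fdp ≤ (f t - f b) / (t - b) := by
        refine le_trans ?_ h1
        rw [le_div_iff_of_neg (by linarith : x - b < 0)]
        rw [le_div_iff₀ (by linarith : (0:ℝ) < b - x)] at hsl2
        nlinarith
      rw [le_div_iff_of_neg (by linarith : t - b < 0)] at h2
      nlinarith
  -- lower pointwise bound (tangent at x)
  have low : ∀ t ∈ Ioo a b, f x - (|fdm| + |fdp|) * (b - a) ≤ f t := by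
    intro t ⟨hat, htb⟩
    rcases le_or_gt t x with htx | hxt
    · rcases eq_or_lt_of_le htx with rfl | htx
      · nlinarith [abs_nonneg fdm, abs_nonneg fdp]
      · have hs : (f x - f t) / (x - t) ≤ fdm := by
          have := hf.slope_le_of_hasDerivWithinAt_Iio ⟨hat.le, htx.le.trans hxb.le⟩ hxI htx
            (hfdm.mono Iio_subset_Iic_self)
          simpa [slope_def_field] using this
        rw [div_le_iff₀ (by linarith : (0:ℝ) < x - t)] at hs
        nlinarith [le_abs_self fdm, abs_nonneg fdp, abs_nonneg fdm]
    · have hs : fdp ≤ (f t - f x) / (t - x) := by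
        have := hf.le_slope_of_hasDerivWithinAt_Ioi hxI ⟨hax.le.trans hxt.le, htb.le⟩ hxt
          (hfdp.mono Ioi_subset_Ici_self)
        simpa [slope_def_field] using this
      rw [le_div_iff₀ (by linarith : (0:ℝ) < t - x)] at hs
      nlinarith [neg_abs_le fdp, abs_nonneg fdm, abs_nonneg fdp]
  have up : ∀ t ∈ Ioo a b, f t ≤ |f a| + |f b| + (|fdm| + |fdp|) * (b - a) := by
    intro t ⟨hat, htb⟩
    rcases le_or_gt t x with htx | hxt
    · have := key1 t ⟨hat.le, htx⟩
      nlinarith [le_abs_self (f a), neg_abs_le (f b), abs_nonneg (f b), neg_abs_le fdm,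
        le_abs_self fdm, abs_nonneg fdp]
    · have := key2 t ⟨hxt.le, htb.le⟩
      nlinarith [le_abs_self (f b), abs_nonneg (f a), neg_abs_le fdp,
        le_abs_self fdp, abs_nonneg fdm]
  -- integrability
  have hcont : ContinuousOn f (Ioo a b) := by
    have := hf.continuousOn_interior
    rwa [interior_Icc] at this
  have hint : IntervalIntegrable f volume a b := by
    rw [intervalIntegrable_iff_integrableOn_Ioo_of_le hab.le]
    set C := |f a| + |f b| + |f x| + (|fdm| + |fdp|) * (b - a) with hC
    refine Integrable.mono' (integrable_const C)
      (hcont.aestronglyMeasurable measurableSet_Ioo) ?_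
    rw [ae_restrict_iff' measurableSet_Ioo]
    filter_upwards with t ht
    rw [Real.norm_eq_abs, abs_le]
    constructor
    · have := low t ht
      nlinarith [neg_abs_le (f x), abs_nonneg (f a), abs_nonneg (f b)]
    · have := up t ht
      nlinarith [abs_nonneg (f x)]
  have hint1 : IntervalIntegrable f volume a x :=
    hint.mono_set (uIcc_subset_uIcc_iff_le.2 (by constructor <;> simp [hab.le, hax.le, hxb.le]))
  have hint2 : IntervalIntegrable f volume x b :=
    hint.mono_set (uIcc_subset_uIcc_iff_le.2 (by constructor <;> simp [hab.le, hax.le, hxb.le]))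
  have hsplit : (∫ t in a..x, f t) + (∫ t in x..b, f t) = ∫ t in a..b, f t :=
    integral_add_adjacent_intervals hint1 hint2
  -- integral inequalities
  have e1 : ∫ t in a..x, fdm * (a - t) ≤ ∫ t in a..x, (f a - f t) := by
    apply integral_mono_on hax.le
    · exact (Continuous.intervalIntegrable (by continuity) _ _)
    · exact intervalIntegrable_const.sub hint1
    · exact key1
  have e2 : ∫ t in x..b, fdp * (b - t) ≤ ∫ t in x..b, (f b - f t) := by
    apply integral_mono_on hxb.le
    · exact (Continuous.intervalIntegrable (by continuity) _ _)
    · exact intervalIntegrable_const.sub hint2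
    · exact key2
  have c1 : ∫ t in a..x, fdm * (a - t) = -(x - a) ^ 2 * fdm / 2 := by
    rw [intervalIntegral.integral_const_mul,
      intervalIntegral.integral_sub intervalIntegrable_const
        intervalIntegrable_id,
      integral_id, _root_.intervalIntegral.integral_const]
    simp only [smul_eq_mul]
    ring
  have c2 : ∫ t in x..b, fdp * (b - t) = (b - x) ^ 2 * fdp / 2 := by
    rw [intervalIntegral.integral_const_mul,
      intervalIntegral.integral_sub intervalIntegrable_const
        intervalIntegrable_id,
      integral_id, _root_.intervalIntegral.integral_const]
    simp only [smul_eq_mul]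
    ring
  have d1 : ∫ t in a..x, (f a - f t) = (x - a) * f a - ∫ t in a..x, f t := by
    rw [intervalIntegral.integral_sub intervalIntegrable_const hint1,
      _root_.intervalIntegral.integral_const]
    simp only [smul_eq_mul]
  have d2 : ∫ t in x..b, (f b - f t) = (b - x) * f b - ∫ t in x..b, f t := by
    rw [intervalIntegral.integral_sub intervalIntegrable_const hint2,
      _root_.intervalIntegral.integral_const]
    simp only [smul_eq_mul]
  rw [c1, d1] at e1
  rw [c2, d2] at e2
  linarith
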